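/- arXiv:1401.0597 — 2 statements merged into one kernel-verified Lean document; each statement's English description precedes it below -/
import Mathlib

section
/- For distinct indices i ≠ j and every positive even integer q, ∫_{S²} (x^i)² (x^j)^q dμ = 4π / ((q+3)(q+1)). -/
/-!
Compute the Gaussian moment `∫_{ℝⁿ} xᵃ e^{-‖x‖²} dx` (`a` a multi-index of even exponents) in two
ways. Fubini splits it into one-dimensional moments, giving `∏ₖ Γ((aₖ + 1)/2)`; polar coordinates
split it into `∫_{Sⁿ⁻¹} xᵃ dσ` times the radial moment `Γ((|a| + n)/2)/2`. Dividing gives every even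
monomial integral over the sphere; for `x_i² x_j^q` on `S²` the Gamma quotient collapses to
`4π/((q+3)(q+1))`.
-/

open MeasureTheory RealInnerProductSpace

noncomputable section

/-- Euclidean 3-space. -/
abbrev E3 := EuclideanSpace ℝ (Fin 3)

/-- The unit sphere `S²` in `ℝ³`. -/
abbrev S2 := Metric.sphere (0 : E3) 1

/-- The surface (area) measure on the unit sphere, normalized so that
the total area is `4π`. -/
abbrev sphereMeasure : Measure S2 := (volume : Measure E3).toSphere

/-- The restriction of the `i`-th Cartesian coordinate function to the sphere. -/
def coordFn (i : Fin 3) (p : S2) : ℝ := (p : E3) i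

/-- The `i`-th standard basis vector of `ℝ³`. -/
def e3 (i : Fin 3) : E3 := EuclideanSpace.single i (1 : ℝ)

open scoped Classical in
/-- The degree-zero homogeneous extension of a function on the unit sphere to `ℝ³`. -/
def homExt (A : S2 → ℝ) : E3 → ℝ := fun x =>
  if hx : ‖x‖⁻¹ • x ∈ S2 then A ⟨‖x‖⁻¹ • x, hx⟩ else 0

/-- The Euclidean Laplacian of a function on `ℝ³`. -/
def eLap (f : E3 → ℝ) (x : E3) : ℝ :=
  ∑ i : Fin 3, iteratedFDeriv ℝ 2 f x ![e3 i, e3 i]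

/-- The Laplace–Beltrami operator of the round metric on the unit sphere,
computed as the Euclidean Laplacian of the degree-zero homogeneous extension. -/
def sphereLap (A : S2 → ℝ) (p : S2) : ℝ := eLap (homExt A) (p : E3)

/-- The (round) gradient of a function on the unit sphere, viewed as a vector in `ℝ³`
tangent to the sphere: the Euclidean gradient of the degree-zero homogeneous extension. -/
def sphereGrad (A : S2 → ℝ) (p : S2) : E3 := gradient (homExt A) (p : E3)

open Real Set Metric

lemma integral_Ioi_pow_mul_exp_neg_sq (d : ℕ) :
    ∫ r in Ioi (0 : ℝ), r ^ d * exp (-r ^ 2) = Gamma ((d + 1) / 2) / 2 := by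
  have := integral_rpow_mul_exp_neg_rpow two_pos (neg_one_lt_zero.trans_le d.cast_nonneg)
  simp only [rpow_natCast, rpow_two] at this
  rw [this]
  ring

lemma integral_pow_mul_exp_neg_sq_of_even {m : ℕ} (hm : Even m) :
    ∫ t : ℝ, t ^ m * exp (-t ^ 2) = Gamma ((m + 1) / 2) := by
  have hsymm : (fun t : ℝ => t ^ m * exp (-t ^ 2)) = fun t => |t| ^ m * exp (-|t| ^ 2) := by
    simp only [hm.pow_abs, sq_abs]
  rw [hsymm, integral_comp_abs (f := fun r => r ^ m * exp (-r ^ 2)),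
    integral_Ioi_pow_mul_exp_neg_sq]
  ring

namespace MeasureTheory.Measure

lemma integral_volumeIoiPow (n : ℕ) (g : ℝ → ℝ) :
    ∫ r, g r ∂volumeIoiPow n = ∫ r in Ioi (0 : ℝ), r ^ n * g r := by
  rw [volumeIoiPow, integral_withDensity_eq_integral_toReal_smul
      (measurable_subtype_coe.pow_const n).ennreal_ofReal (.of_forall fun _ => ENNReal.ofReal_lt_top),
    integral_subtype_comap measurableSet_Ioi fun r => (ENNReal.ofReal (r ^ n)).toReal • g r]
  refine setIntegral_congr_fun measurableSet_Ioi fun r (hr : 0 < r) => ?_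
  rw [ENNReal.toReal_ofReal (by positivity), smul_eq_mul]

variable {E : Type*} [NormedAddCommGroup E] [NormedSpace ℝ E] [MeasurableSpace E] [BorelSpace E]
  [FiniteDimensional ℝ E] [Nontrivial E] (μ : Measure E) [μ.IsAddHaarMeasure]

theorem integral_eq_integral_toSphere_mul_integral_Ioi {F : E → ℝ} (f : sphere (0 : E) 1 → ℝ)
    (g : ℝ → ℝ) (hF : ∀ (u : sphere (0 : E) 1) (r : ℝ), 0 < r → F (r • (u : E)) = f u * g r) :
    ∫ x, F x ∂μ
      = (∫ u, f u ∂μ.toSphere) * ∫ r in Ioi (0 : ℝ), r ^ (Module.finrank ℝ E - 1) * g r := by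
  have hpolar := (μ.measurePreserving_homeomorphUnitSphereProd).integral_comp
    (Homeomorph.measurableEmbedding _) fun p => f p.1 * g p.2
  rw [integral_prod_mul (f := f) (g := fun r : Ioi (0 : ℝ) => g r), integral_volumeIoiPow]
    at hpolar
  calc ∫ x, F x ∂μ = ∫ x : ({0}ᶜ : Set E), F x ∂μ.comap (↑) := by
        rw [integral_subtype_comap (measurableSet_singleton 0).compl, restrict_compl_singleton]
    _ = ∫ x : ({0}ᶜ : Set E), f (homeomorphUnitSphereProd E x).1
          * g (homeomorphUnitSphereProd E x).2 ∂μ.comap (↑) := by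
        refine integral_congr_ae (.of_forall fun x => ?_)
        have hx : 0 < ‖(x : E)‖ := norm_pos_iff.mpr x.2
        simpa [smul_inv_smul₀ hx.ne'] using hF (homeomorphUnitSphereProd E x).1 ‖(x : E)‖ hx
    _ = _ := hpolar

end MeasureTheory.Measure

namespace EuclideanSpace

variable {ι : Type*} [Fintype ι]

theorem integral_prod_pow_mul_exp_neg_norm_sq (a : ι → ℕ) (ha : ∀ k, Even (a k)) :
    ∫ x : EuclideanSpace ℝ ι, (∏ k, x k ^ a k) * exp (-‖x‖ ^ 2)
      = ∏ k, Gamma ((a k + 1) / 2) := by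
  rw [← (PiLp.volume_preserving_toLp ι).integral_comp
    (MeasurableEquiv.toLp 2 (ι → ℝ)).measurableEmbedding]
  have hsplit (y : ι → ℝ) : (∏ k, y k ^ a k) * exp (-‖WithLp.toLp 2 y‖ ^ 2)
      = ∏ k, y k ^ a k * exp (-y k ^ 2) := by
    rw [real_norm_sq_eq, ← Finset.sum_neg_distrib, exp_sum, Finset.prod_mul_distrib]
  simp only [hsplit]
  rw [integral_fintype_prod_volume_eq_prod (fun k t => t ^ a k * exp (-t ^ 2))]
  exact Finset.prod_congr rfl fun k _ => integral_pow_mul_exp_neg_sq_of_even (ha k)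

theorem integral_toSphere_prod_pow [Nonempty ι] (a : ι → ℕ) (ha : ∀ k, Even (a k)) :
    ∫ u : sphere (0 : EuclideanSpace ℝ ι) 1, ∏ k, (u : EuclideanSpace ℝ ι) k ^ a k ∂volume.toSphere
      = 2 * (∏ k, Gamma ((a k + 1) / 2)) / Gamma ((∑ k, a k + Fintype.card ι) / 2) := by
  set d := ∑ k, a k
  have hpolar := (volume : Measure (EuclideanSpace ℝ ι)).integral_eq_integral_toSphere_mul_integral_Ioi
    (F := fun x => (∏ k, x k ^ a k) * exp (-‖x‖ ^ 2)) (fun u => ∏ k, (u : EuclideanSpace ℝ ι) k ^ a k)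
    (fun r => r ^ d * exp (-r ^ 2)) fun u r hr => by
      simp only [PiLp.smul_apply, smul_eq_mul, mul_pow, Finset.prod_mul_distrib,
        Finset.prod_pow_eq_pow_sum, norm_smul, norm_eq_abs, abs_of_pos hr, norm_eq_of_mem_sphere,
        mul_one]
      ring
  have hradial : ∫ r in Ioi (0 : ℝ),
      r ^ (Module.finrank ℝ (EuclideanSpace ℝ ι) - 1) * (r ^ d * exp (-r ^ 2))
        = Gamma ((d + Fintype.card ι) / 2) / 2 := by
    simp_rw [finrank_euclideanSpace, ← mul_assoc, ← pow_add, integral_Ioi_pow_mul_exp_neg_sq]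
    push_cast [Nat.cast_sub Fintype.card_pos]
    ring_nf
  have hΓ : Gamma ((d + Fintype.card ι) / 2) ≠ 0 := (Gamma_pos_of_pos (by positivity)).ne'
  rw [integral_prod_pow_mul_exp_neg_norm_sq a ha, hradial] at hpolar
  field_simp
  linarith

end EuclideanSpace

lemma prod_pow_single_add_single {ι : Type*} [Fintype ι] [DecidableEq ι] (x : ι → ℝ) (i j : ι)
    (m n : ℕ) : ∏ k, x k ^ ((Pi.single i m + Pi.single j n : ι → ℕ) k) = x i ^ m * x j ^ n := by
  simp only [Pi.add_apply, pow_add, Finset.prod_mul_distrib]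
  rw [Fintype.prod_eq_single i fun k hk => by simp [hk],
    Fintype.prod_eq_single j fun k hk => by simp [hk]]
  simp

lemma prod_fin_three_single_add_single (f : ℕ → ℝ) {i j : Fin 3} (hij : i ≠ j) (m n : ℕ) :
    ∏ k, f ((Pi.single i m + Pi.single j n : Fin 3 → ℕ) k) = f m * f n * f 0 := by
  fin_cases i <;> fin_cases j <;> first
    | exact absurd rfl hij
    | simp only [Fin.prod_univ_three, Pi.add_apply, Pi.single_apply, Fin.reduceEq, ↓reduceIte,
        add_zero, zero_add, Fin.zero_eta, Fin.mk_one, Fin.reduceFinMk, mul_comm, mul_left_comm,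
        mul_assoc]

lemma Gamma_add_five_div_two {s : ℝ} (hs : -1 < s) :
    Gamma ((s + 5) / 2) = (s + 3) / 2 * ((s + 1) / 2) * Gamma ((s + 1) / 2) := by
  rw [show (s + 5) / 2 = (s + 1) / 2 + 1 + 1 by ring, Gamma_add_one (by linarith),
    Gamma_add_one (by linarith)]
  ring

lemma Gamma_three_halves : Gamma (3 / 2) = √π / 2 := by
  rw [show (3 : ℝ) / 2 = 1 / 2 + 1 by norm_num, Gamma_add_one (by norm_num), Gamma_one_half_eq]
  ring

theorem sphere_integral_sq_pow_general (i j : Fin 3) (hij : i ≠ j) (q : ℕ)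
    (heq : Even q) :
    ∫ z : S2, (coordFn i z) ^ 2 * (coordFn j z) ^ q ∂sphereMeasure
      = 4 * Real.pi / (((q : ℝ) + 3) * ((q : ℝ) + 1)) := by
  have ha : ∀ k, Even ((Pi.single i 2 + Pi.single j q : Fin 3 → ℕ) k) := fun k => by
    simp only [Pi.add_apply, Pi.single_apply]
    split_ifs <;> simp [Nat.even_add, heq]
  have hsum : ∑ k, (Pi.single i 2 + Pi.single j q : Fin 3 → ℕ) k = q + 2 := by
    simp [Finset.sum_add_distrib, add_comm]
  have hΓ : ∏ k, Gamma ((((Pi.single i 2 + Pi.single j q : Fin 3 → ℕ) k : ℕ) + 1) / 2)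
      = Gamma (3 / 2) * Gamma ((q + 1) / 2) * Gamma (1 / 2) :=
    (prod_fin_three_single_add_single (fun n : ℕ => Gamma ((n + 1) / 2)) hij 2 q).trans
      (by norm_num)
  have hmonomial := EuclideanSpace.integral_toSphere_prod_pow _ ha
  simp only [prod_pow_single_add_single, hsum, hΓ, Fintype.card_fin, Gamma_three_halves,
    Gamma_one_half_eq] at hmonomial
  simp only [coordFn, hmonomial]
  have hG : 0 < Gamma ((q + 1) / 2) := Gamma_pos_of_pos (by positivity)
  push_cast
  rw [show ((q : ℝ) + 2 + 3) / 2 = (q + 5) / 2 by ring,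
    Gamma_add_five_div_two (by linarith [q.cast_nonneg (α := ℝ)])]
  field_simp
  rw [sq_sqrt pi_pos.le]
  ring

/-- For `i ≠ j` and positive even `q`, `∫_{S²} (xⁱ)² (xʲ)^q dμ = 4π/((q+3)(q+1))`. -/
theorem sphere_integral_sq_pow (i j : Fin 3) (hij : i ≠ j) (q : ℕ)
    (hq : 0 < q) (heq : Even q) :
    ∫ z : S2, (coordFn i z) ^ 2 * (coordFn j z) ^ q ∂sphereMeasure
      = 4 * Real.pi / (((q : ℝ) + 3) * ((q : ℝ) + 1)) :=
  sphere_integral_sq_pow_general i j hij q heq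
end
end

section
/- Let A ∈ C²(S²) and consider the hypersurface t = A(u) (independent of r) in Minkowski space, with induced metric g_{ij} = δ_{ij} − f_i f_j where f(x) = A(x/|x|). Then the BORT center of mass integral converges and equals C^i = −(1/8π) ∫_{S²} |∇̃A|² x^i dμ, where ∇̃ is the gradient on S². -/
/-! Since `f(x) = A(x/|x|)` is homogeneous of degree `0`, Euler's relation gives `x · ∇f = 0`
and `x_j ∂_j ∂_k f = -∂_k f`. With `g_{jk} = δ_{jk} - f_j f_k` these identities collapse the
flux integrand at `|x| = r` to `-2 |∇f(x)|² xⁱ / r`, and `∇f(rω) = r⁻¹ ∇f(ω)`. So the flux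
integral over `|x| = r` equals `-(1/8π) ∫ |∇̃A|² xⁱ` for every `r > 0`: the limit is attained. -/

open MeasureTheory RealInnerProductSpace

noncomputable section

/-- Partial derivative `∂_i f` on `ℝ³`. -/
def pd (f : E3 → ℝ) (i : Fin 3) (x : E3) : ℝ := fderiv ℝ f x (e3 i)

/-- Second partial derivative `∂_i ∂_j f` on `ℝ³`. -/
def pd2 (f : E3 → ℝ) (i j : Fin 3) (x : E3) : ℝ := iteratedFDeriv ℝ 2 f x ![e3 i, e3 j]

/-- The induced metric of the graph `t = f` in Minkowski space, as a function of `x`. -/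
def gmet (f : E3 → ℝ) (x : E3) (j k : Fin 3) : ℝ :=
  (if j = k then (1 : ℝ) else 0) - pd f j x * pd f k x

theorem fderiv_apply_self_of_smul_eq_zpow_smul {E F : Type*} [NormedAddCommGroup E]
    [NormedSpace ℝ E] [NormedAddCommGroup F] [NormedSpace ℝ F] {h : E → F} {x : E} (k : ℤ)
    (hd : DifferentiableAt ℝ h x) (hh : ∀ t : ℝ, 0 < t → h (t • x) = t ^ k • h x) :
    fderiv ℝ h x x = (k : ℝ) • h x := by
  have hray : HasDerivAt (fun t : ℝ => h (t • x)) (fderiv ℝ h x x) 1 := by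
    have hx : HasFDerivAt h (fderiv ℝ h x) ((1 : ℝ) • x) := by
      rw [one_smul]; exact hd.hasFDerivAt
    have hline : HasDerivAt (fun t : ℝ => t • x) x 1 := by
      simpa using (hasDerivAt_id (1 : ℝ)).smul_const x
    exact hx.comp_hasDerivAt 1 hline
  have hpow : HasDerivAt (fun t : ℝ => t ^ k • h x) ((k : ℝ) • h x) 1 := by
    simpa using (hasDerivAt_zpow k (1 : ℝ) (Or.inl one_ne_zero)).smul_const (h x)
  have hev : (fun t : ℝ => h (t • x)) =ᶠ[nhds 1] fun t => t ^ k • h x := by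
    filter_upwards [Ioi_mem_nhds one_pos] with t ht using hh t ht
  exact (hray.congr_of_eventuallyEq hev.symm).unique hpow

theorem EuclideanSpace.sum_coord_mul_apply_single {ι : Type*} [Fintype ι] [DecidableEq ι]
    (L : EuclideanSpace ℝ ι →L[ℝ] ℝ) (v : EuclideanSpace ℝ ι) :
    ∑ j, v j * L (EuclideanSpace.single j 1) = L v := by
  conv_rhs => rw [← (EuclideanSpace.basisFun ι ℝ).sum_repr v]
  simp [map_sum]

section HomExt

variable {A : S2 → ℝ}

theorem homExt_smul {c : ℝ} (hc : 0 < c) (x : E3) : homExt A (c • x) = homExt A x := by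
  have hnormalize : ‖c • x‖⁻¹ • (c • x) = ‖x‖⁻¹ • x := by
    rw [norm_smul, Real.norm_of_nonneg hc.le, smul_smul, mul_inv, mul_right_comm,
      inv_mul_cancel₀ hc.ne', one_mul]
  unfold homExt
  rw [hnormalize]

theorem fderiv_homExt_smul {c : ℝ} (hc : 0 < c) (x : E3) :
    fderiv ℝ (homExt A) (c • x) = c⁻¹ • fderiv ℝ (homExt A) x := by
  have h := fderiv_comp_smul (f := homExt A) (x := x) c
  simp only [homExt_smul hc] at h
  rw [h, smul_smul, inv_mul_cancel₀ hc.ne', one_smul]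

theorem gradient_homExt_smul {c : ℝ} (hc : 0 < c) (x : E3) :
    gradient (homExt A) (c • x) = c⁻¹ • gradient (homExt A) x := by
  simp only [gradient, fderiv_homExt_smul hc, map_smul]

theorem fderiv_homExt_apply_self {x : E3} (hd : DifferentiableAt ℝ (homExt A) x) :
    fderiv ℝ (homExt A) x x = 0 := by
  simpa using fderiv_apply_self_of_smul_eq_zpow_smul 0 hd
    (fun t ht => by simp [homExt_smul ht])

theorem fderiv_fderiv_homExt_apply_self {x : E3}
    (hd : DifferentiableAt ℝ (fderiv ℝ (homExt A)) x) :
    fderiv ℝ (fderiv ℝ (homExt A)) x x = -fderiv ℝ (homExt A) x := by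
  simpa using fderiv_apply_self_of_smul_eq_zpow_smul (-1) hd
    (fun t ht => by simp [fderiv_homExt_smul ht])

end HomExt

section Pointwise

variable {f : E3 → ℝ} {x : E3}

theorem pd2_eq_fderiv_fderiv (i j : Fin 3) :
    pd2 f i j x = fderiv ℝ (fderiv ℝ f) x (e3 i) (e3 j) := by
  simp [pd2, iteratedFDeriv_two_apply]

theorem pd2_comm (hf : ContDiffAt ℝ 2 f x) (i j : Fin 3) : pd2 f i j x = pd2 f j i x := by
  simp only [pd2_eq_fderiv_fderiv]
  exact hf.isSymmSndFDerivAt (by simp) (e3 i) (e3 j)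

theorem hasFDerivAt_pd (hf : ContDiffAt ℝ 2 f x) (j : Fin 3) :
    HasFDerivAt (pd f j) ((ContinuousLinearMap.apply ℝ ℝ (e3 j)).comp
      (fderiv ℝ (fderiv ℝ f) x)) x :=
  (ContinuousLinearMap.apply ℝ ℝ (e3 j)).hasFDerivAt.comp x
    ((hf.fderiv_right (m := 1) (by norm_num)).differentiableAt one_ne_zero).hasFDerivAt

theorem pd_gmet (hf : ContDiffAt ℝ 2 f x) (j k m : Fin 3) :
    pd (fun y => gmet f y j k) m x
      = -(pd2 f m j x * pd f k x + pd f j x * pd2 f m k x) := by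
  have h : HasFDerivAt (fun y => gmet f y j k) _ x :=
    ((hasFDerivAt_pd hf j).mul (hasFDerivAt_pd hf k)).const_sub _
  rw [pd, h.fderiv]
  simp only [pd, add_apply, neg_apply, smul_apply, ContinuousLinearMap.comp_apply,
    ContinuousLinearMap.apply_apply, smul_eq_mul, pd2_eq_fderiv_fderiv]
  ring

theorem sum_pd_sq (f : E3 → ℝ) (x : E3) : ∑ k, pd f k x ^ 2 = ‖gradient f x‖ ^ 2 := by
  have hcoord : ∀ k, gradient f x k = pd f k x := fun k => by
    rw [pd, gradient, ← InnerProductSpace.toDual_symm_apply, e3,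
      EuclideanSpace.inner_single_right]
    simp
  simp [EuclideanSpace.norm_sq_eq, hcoord]

end Pointwise

/-- The integrand of `Cⁱ` at a point `x` of the sphere `|x| = r`, whose unit normal is `x / r`. -/
def bortIntegrand (f : E3 → ℝ) (i : Fin 3) (r : ℝ) (x : E3) : ℝ :=
  x i * ∑ j : Fin 3,
      (∑ k : Fin 3, (pd (fun y => gmet f y j k) k x - pd (fun y => gmet f y k k) j x))
        * (x j / r)
    - ∑ k : Fin 3, ((gmet f x k i - if k = i then (1 : ℝ) else 0) * (x k / r)
        - (gmet f x k k - 1) * (x i / r))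

theorem bortIntegrand_eq {f : E3 → ℝ} {x : E3} (hf : ContDiffAt ℝ 2 f x)
    (heuler₀ : fderiv ℝ f x x = 0) (heuler₁ : fderiv ℝ (fderiv ℝ f) x x = -fderiv ℝ f x)
    (i : Fin 3) (r : ℝ) :
    bortIntegrand f i r x = -2 * ‖gradient f x‖ ^ 2 * (x i / r) := by
  have e₀ : ∑ j, x j * pd f j x = 0 :=
    (EuclideanSpace.sum_coord_mul_apply_single _ x).trans heuler₀
  have e₁ : ∀ k, ∑ j, x j * pd2 f j k x = -pd f k x := fun k => by
    simpa [pd2_eq_fderiv_fderiv, pd, e3, heuler₁] using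
      EuclideanSpace.sum_coord_mul_apply_single
        ((ContinuousLinearMap.apply ℝ ℝ (e3 k)).comp (fderiv ℝ (fderiv ℝ f) x)) x
  have hflux : ∀ j k : Fin 3, pd (fun y => gmet f y j k) k x - pd (fun y => gmet f y k k) j x
      = pd f k x * pd2 f j k x - pd f j x * pd2 f k k x := fun j k => by
    rw [pd_gmet hf, pd_gmet hf, pd2_comm hf k j]
    ring
  have hmetric : ∀ j k : Fin 3,
      gmet f x j k - (if j = k then 1 else 0) = -(pd f j x * pd f k x) :=
    fun j k => by simp [gmet]
  have hmetric_diag : ∀ k : Fin 3, gmet f x k k - 1 = -(pd f k x * pd f k x) :=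
    fun k => by simpa using hmetric k k
  rw [← sum_pd_sq]
  simp only [bortIntegrand, hflux, hmetric, hmetric_diag, Fin.sum_univ_three] at e₀ e₁ ⊢
  linear_combination (x i / r) * (pd f 0 x * e₁ 0 + pd f 1 x * e₁ 1 + pd f 2 x * e₁ 2
    - (pd2 f 0 0 x + pd2 f 1 1 x + pd2 f 2 2 x) * e₀) + pd f i x / r * e₀

theorem bortIntegrand_homExt_smul {A : S2 → ℝ} (hA : ContDiffOn ℝ 2 (homExt A) {(0 : E3)}ᶜ)
    (i : Fin 3) {r : ℝ} (hr : 0 < r) (ω : S2) :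
    bortIntegrand (homExt A) i r (r • (ω : E3))
      = -2 * r⁻¹ ^ 2 * (⟪sphereGrad A ω, sphereGrad A ω⟫ * coordFn i ω) := by
  have hx : r • (ω : E3) ≠ 0 := smul_ne_zero hr.ne' (ne_zero_of_mem_unit_sphere ω)
  have hf : ContDiffAt ℝ 2 (homExt A) (r • (ω : E3)) :=
    hA.contDiffAt (isOpen_compl_singleton.mem_nhds hx)
  have hf' := hf.fderiv_right (m := 1) (by norm_num)
  rw [bortIntegrand_eq hf (fderiv_homExt_apply_self (hf.differentiableAt (by simp)))
    (fderiv_fderiv_homExt_apply_self (hf'.differentiableAt one_ne_zero)),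
    gradient_homExt_smul hr, real_inner_self_eq_norm_sq, norm_smul, sphereGrad, coordFn]
  simp only [PiLp.smul_apply, smul_eq_mul, Real.norm_of_nonneg (inv_nonneg.mpr hr.le)]
  field_simp

/-- The BORT center of mass of the graph `t = A(u)` (independent of `r`) in Minkowski space:
the flux integrals over the coordinate spheres `{|x| = r}` (written via the parametrization
`x = r ω`, `dσ₀ = r² dμ`) converge as `r → ∞` to
`Cⁱ = -(1/8π) ∫_{S²} |∇̃A|² xⁱ dμ`.  Here `f = homExt A`, i.e. `f(x) = A(x/|x|)`. -/
theorem bort_center_of_mass_graph (A : S2 → ℝ)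
    (hA : ContDiffOn ℝ 2 (homExt A) {(0 : E3)}ᶜ) (i : Fin 3) :
    Filter.Tendsto
      (fun r : ℝ =>
        (1 / (16 * Real.pi)) * r ^ 2 *
          ∫ ω : S2,
            ((r • (ω : E3)) i *
                ∑ j : Fin 3,
                  (∑ k : Fin 3,
                      (pd (fun y => gmet (homExt A) y j k) k (r • (ω : E3))
                        - pd (fun y => gmet (homExt A) y k k) j (r • (ω : E3))))
                    * ((r • (ω : E3)) j / r)
              - ∑ k : Fin 3,
                  ((gmet (homExt A) (r • (ω : E3)) k i - if k = i then (1 : ℝ) else 0)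
                      * ((r • (ω : E3)) k / r)
                    - (gmet (homExt A) (r • (ω : E3)) k k - 1) * ((r • (ω : E3)) i / r)))
            ∂sphereMeasure)
      Filter.atTop
      (nhds (-(1 / (8 * Real.pi)) *
        ∫ ω : S2, ⟪sphereGrad A ω, sphereGrad A ω⟫ * coordFn i ω ∂sphereMeasure)) := by
  refine tendsto_const_nhds.congr' ?_
  filter_upwards [Filter.eventually_gt_atTop 0] with r hr
  change _ = 1 / (16 * Real.pi) * r ^ 2 *
    ∫ ω : S2, bortIntegrand (homExt A) i r (r • (ω : E3)) ∂sphereMeasure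
  simp only [bortIntegrand_homExt_smul hA i hr, integral_const_mul]
  field_simp
  ring
end
end
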